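/- Let (x^k), (λ^k), (μ^k) be the sequences generated by the augmented Lagrangian method (Algorithm 3.1) applied to the partially penalized GNEP, under Assumption 3.2 with ε_k → 0 and ε'_k → 0. Then every limit point (x̄, λ̄, μ̄) of the sequence of triples (x^k, λ^k, μ^k) is a KKT point of the GNEP; no constraint qualification is required. -/

import Mathlib

/-!
Pass to the shifted sequence `(x^{k+1}, λ^{k+1}, μ^{k+1})` and to an ultrafilter `l ≤ atTop`
along which it converges to the cluster point. Stationarity and complementarity for `h` are limits
of the inexactness bounds of Assumption 3.2. For `g`, if the penalty test eventually always
succeeds, the complementarity residual decreases geometrically and tends to zero; otherwise the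
penalty parameter is multiplied by `γ > 1` infinitely often, hence tends to infinity, and the
safeguarded multiplier `u ∈ [0, u^max]` forces `λ̄ᵢ = 0` where `gᵢ(x̄) < 0` and rules out
`gᵢ(x̄) > 0`.
-/

open Filter Topology Finset Function RealInnerProductSpace

/-- The strategy space of a GNEP: one Euclidean block per player. -/
abbrev Strat {N : ℕ} (n : Fin N → ℕ) := (ν : Fin N) → EuclideanSpace ℝ (Fin (n ν))

/-- Partial gradient of `f : Strat n → ℝ` with respect to player `ν`'s block at `x`. -/
noncomputable def pgrad {N : ℕ} {n : Fin N → ℕ} (ν : Fin N)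
    (f : Strat n → ℝ) (x : Strat n) : EuclideanSpace ℝ (Fin (n ν)) :=
  gradient (fun z => f (Function.update x ν z)) (x ν)

/-- Positive linear dependence of a family on a finite index set. -/
def PosLinDep {ι E : Type*} [AddCommGroup E] [Module ℝ E]
    (s : Finset ι) (v : ι → E) : Prop :=
  ∃ a : ι → ℝ, (∀ i, 0 ≤ a i) ∧ (∃ i ∈ s, a i ≠ 0) ∧ ∑ i ∈ s, a i • v i = 0

/-- Linear dependence of a family on a finite index set. -/
def LinDep {ι E : Type*} [AddCommGroup E] [Module ℝ E]
    (s : Finset ι) (v : ι → E) : Prop :=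
  ∃ a : ι → ℝ, (∃ i ∈ s, a i ≠ 0) ∧ ∑ i ∈ s, a i • v i = 0

/-- CPLD with respect to player `ν`. -/
def CPLDnu {N : ℕ} {n : Fin N → ℕ} {ι : Type*} (ν : Fin N)
    (c : ι → Strat n → ℝ) (x : Strat n) : Prop :=
  ∀ I : Finset ι, (∀ i ∈ I, c i x = 0) →
    PosLinDep I (fun i => pgrad ν (c i) x) →
    ∃ U ∈ 𝓝 x, ∀ y ∈ U, LinDep I (fun i => pgrad ν (c i) y)

/-- EMFCQ with respect to player `ν`. -/
def EMFCQnu {N : ℕ} {n : Fin N → ℕ} {ι : Type*} (ν : Fin N)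
    (c : ι → Strat n → ℝ) (x : Strat n) : Prop :=
  ∃ d : EuclideanSpace ℝ (Fin (n ν)), ∀ i, 0 ≤ c i x → inner (𝕜 := ℝ) (pgrad ν (c i) x) d < 0


section PartialGradient

variable {N : ℕ} {n : Fin N → ℕ}

theorem pgrad_eq_toDual_symm_fderiv_comp (ν : Fin N) {f : Strat n → ℝ} {x : Strat n}
    (hf : DifferentiableAt ℝ f x) :
    pgrad ν f x = (InnerProductSpace.toDual ℝ _).symm
      ((fderiv ℝ f x).comp (.pi (Pi.single ν (.id ℝ _)))) := by
  have hcomp := (update_eq_self ν x ▸ hf.hasFDerivAt).comp (x ν)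
    (hasFDerivAt_update (𝕜 := ℝ) x (x ν))
  rw [update_eq_self] at hcomp
  exact congrArg _ hcomp.fderiv

theorem continuous_pgrad (ν : Fin N) {f : Strat n → ℝ} (hf : ContDiff ℝ 1 f) :
    Continuous (pgrad ν f) := by
  rw [show pgrad ν f = _ from
    funext fun x => pgrad_eq_toDual_symm_fderiv_comp ν (hf.differentiable one_ne_zero x)]
  exact (InnerProductSpace.toDual ℝ _).symm.continuous.comp
    ((hf.continuous_fderiv one_ne_zero).clm_comp continuous_const)

theorem Filter.Tendsto.pgrad_lagrangian {α ι κ : Type*} [Fintype ι] [Fintype κ]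
    {l : Filter α} (ν : Fin N) {θ : Strat n → ℝ} {g : ι → Strat n → ℝ} {h : κ → Strat n → ℝ}
    (hθ : ContDiff ℝ 1 θ) (hg : ∀ i, ContDiff ℝ 1 (g i)) (hh : ∀ j, ContDiff ℝ 1 (h j))
    {y : α → Strat n} {a : α → ι → ℝ} {b : α → κ → ℝ}
    {ybar : Strat n} {abar : ι → ℝ} {bbar : κ → ℝ}
    (hy : Tendsto y l (𝓝 ybar)) (ha : Tendsto a l (𝓝 abar)) (hb : Tendsto b l (𝓝 bbar)) :
    Tendsto (fun k => pgrad ν θ (y k) + ∑ i, a k i • pgrad ν (g i) (y k)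
        + ∑ j, b k j • pgrad ν (h j) (y k)) l
      (𝓝 (pgrad ν θ ybar + ∑ i, abar i • pgrad ν (g i) ybar + ∑ j, bbar j • pgrad ν (h j) ybar)) :=
  ((((continuous_pgrad ν hθ).tendsto _).comp hy).add
    (tendsto_finsetSum _ fun i _ =>
      (ha.apply_nhds i).smul (((continuous_pgrad ν (hg i)).tendsto _).comp hy))).add
    (tendsto_finsetSum _ fun j _ =>
      (hb.apply_nhds j).smul (((continuous_pgrad ν (hh j)).tendsto _).comp hy))

end PartialGradient

theorem mapClusterPt_atTop_comp_add_nat_iff {X : Type*} [TopologicalSpace X] {u : ℕ → X} {x : X}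
    (k : ℕ) : MapClusterPt x atTop (fun n => u (n + k)) ↔ MapClusterPt x atTop u := by
  rw [← Function.comp_def, mapClusterPt_comp, map_add_atTop_eq_nat]

theorem eq_zero_of_tendsto_of_norm_le {α E : Type*} [NormedAddCommGroup E] {l : Filter α}
    [l.NeBot] {f : α → E} {y : E} {e : α → ℝ} (hf : Tendsto f l (𝓝 y))
    (he : Tendsto e l (𝓝 0)) (hle : ∀ a, ‖f a‖ ≤ e a) : y = 0 :=
  tendsto_nhds_unique hf (squeeze_zero_norm hle he)

theorem tendsto_nhds_zero_of_eventually_le_mul {V : ℕ → ℝ} {τ : ℝ} (hV : ∀ k, 0 ≤ V k)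
    (hτ : τ < 1) (h : ∀ᶠ k in atTop, V (k + 1) ≤ τ * V k) : Tendsto V atTop (𝓝 0) := by
  have hnorm : ∀ k, ‖V k‖ = V k := fun k => Real.norm_of_nonneg (hV k)
  exact (summable_of_ratio_norm_eventually_le hτ (by simpa only [hnorm] using h)).tendsto_atTop_zero

theorem tendsto_atTop_of_frequently_eq_mul {ρ : ℕ → ℝ} {γ : ℝ} (hγ : 1 < γ) (h0 : 0 < ρ 0)
    (hstep : ∀ k, ρ (k + 1) = ρ k ∨ ρ (k + 1) = γ * ρ k)
    (hfreq : ∃ᶠ k in atTop, ρ (k + 1) = γ * ρ k) : Tendsto ρ atTop atTop := by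
  have hpos : ∀ k, 0 < ρ k := by
    intro k
    induction k with
    | zero => exact h0
    | succ k ih => rcases hstep k with hk | hk <;> rw [hk] <;> positivity
  have hmono : Monotone ρ := monotone_nat_of_le_succ fun k => by
    rcases hstep k with hk | hk
    · exact hk.ge
    · exact hk ▸ le_mul_of_one_le_left (hpos k).le hγ.le
  refine (tendsto_atTop_of_monotone hmono).resolve_right ?_
  rintro ⟨L, hL⟩
  -- at a finite limit `L > 0` the ratio `ρ (k + 1) / ρ k` tends to `1 < γ`
  have hLpos : 0 < L := h0.trans_le (hmono.ge_of_tendsto hL 0)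
  have hgap : Tendsto (fun k => ρ (k + 1) - γ * ρ k) atTop (𝓝 (L - γ * L)) :=
    ((tendsto_add_atTop_iff_nat 1).2 hL).sub (hL.const_mul γ)
  have hneg : ∀ᶠ k in atTop, ρ (k + 1) - γ * ρ k < 0 :=
    hgap.eventually_lt_const (by nlinarith)
  obtain ⟨k, hk, hk'⟩ := (hfreq.and_eventually hneg).exists
  linarith

theorem min_neg_eq_zero_of_tendsto_penalty {α : Type*} {l : Filter α} [l.NeBot]
    {G Λ U R : α → ℝ} {gbar lbar B : ℝ} (hG : Tendsto G l (𝓝 gbar)) (hΛ : Tendsto Λ l (𝓝 lbar))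
    (hR : Tendsto R l atTop) (hU : ∀ a, U a ∈ Set.Icc 0 B)
    (hΛeq : ∀ a, Λ a = max (U a + R a * G a) 0) : min (-gbar) lbar = 0 := by
  have hlbar : 0 ≤ lbar := ge_of_tendsto' hΛ fun a => hΛeq a ▸ le_max_right _ _
  have hgbar : gbar ≤ 0 := by
    by_contra! hpos
    have hbig : Tendsto (fun a => R a * (gbar / 2)) l atTop := hR.atTop_mul_const (by linarith)
    refine not_tendsto_atTop_of_tendsto_nhds hΛ (tendsto_atTop_mono' l ?_ hbig)
    filter_upwards [hG.eventually_const_lt (half_lt_self hpos), hR.eventually_ge_atTop 0]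
      with a hGa hRa
    rw [hΛeq a]
    nlinarith [le_max_left (U a + R a * G a) 0, (hU a).1]
  rcases hgbar.lt_or_eq with hneg | rfl
  · have hΛ0 : ∀ᶠ a in l, Λ a = 0 := by
      filter_upwards [hG.eventually_lt_const (by linarith : gbar < gbar / 2),
        (hR.atTop_mul_const (by linarith : 0 < -gbar / 2)).eventually_ge_atTop B,
        hR.eventually_ge_atTop 0] with a hGa hRB hR0
      rw [hΛeq a]
      exact max_eq_right (by nlinarith [(hU a).2])
    rw [tendsto_nhds_unique hΛ (tendsto_const_nhds.congr' (hΛ0.mono fun a h => h.symm))]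
    exact min_eq_right (by linarith)
  · simpa using hlbar

noncomputable def complementarityResidual {ι : Type*} [Fintype ι] (G Λ : ι → ℝ) : ℝ :=
  Real.sqrt (∑ i, (min (-G i) (Λ i)) ^ 2)

theorem abs_min_le_complementarityResidual {ι : Type*} [Fintype ι] (G Λ : ι → ℝ) (i : ι) :
    |min (-G i) (Λ i)| ≤ complementarityResidual G Λ :=
  Real.abs_le_sqrt
    (Finset.single_le_sum (f := fun i => (min (-G i) (Λ i)) ^ 2) (fun _ _ => sq_nonneg _)
      (Finset.mem_univ i))

theorem min_neg_eq_zero_of_penalty_update {ι : Type*} [Fintype ι] {l : Filter ℕ} [l.NeBot]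
    (hl : l ≤ atTop) {G Λ U : ℕ → ι → ℝ} {ρ : ℕ → ℝ} {Gbar Λbar : ι → ℝ} {B τ γ : ℝ}
    (hG : Tendsto (fun k => G (k + 1)) l (𝓝 Gbar)) (hΛ : Tendsto (fun k => Λ (k + 1)) l (𝓝 Λbar))
    (hU : ∀ k i, U k i ∈ Set.Icc 0 B)
    (hΛeq : ∀ k i, Λ (k + 1) i = max (U k i + ρ k * G (k + 1) i) 0)
    (hτ : τ < 1) (hγ : 1 < γ) (hρ0 : 0 < ρ 0)
    (hρ : ∀ k,
      (complementarityResidual (G (k + 1)) (Λ (k + 1)) ≤ τ * complementarityResidual (G k) (Λ k) →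
        ρ (k + 1) = ρ k) ∧
      (¬ complementarityResidual (G (k + 1)) (Λ (k + 1)) ≤
          τ * complementarityResidual (G k) (Λ k) →
        ρ (k + 1) = γ * ρ k))
    (i : ι) : min (-Gbar i) (Λbar i) = 0 := by
  by_cases hev : ∀ᶠ k in atTop,
      complementarityResidual (G (k + 1)) (Λ (k + 1)) ≤ τ * complementarityResidual (G k) (Λ k)
  · have hres := tendsto_nhds_zero_of_eventually_le_mul
      (V := fun k => complementarityResidual (G k) (Λ k)) (fun _ => Real.sqrt_nonneg _) hτ hev
    exact eq_zero_of_tendsto_of_norm_le ((hG.apply_nhds i).neg.min (hΛ.apply_nhds i))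
      (((tendsto_add_atTop_iff_nat 1).2 hres).mono_left hl)
      fun k => abs_min_le_complementarityResidual _ _ i
  · have hρtop : Tendsto ρ atTop atTop :=
      tendsto_atTop_of_frequently_eq_mul hγ hρ0 (fun k => (em _).imp (hρ k).1 (hρ k).2)
        ((not_eventually.1 hev).mono fun k => (hρ k).2)
    exact min_neg_eq_zero_of_tendsto_penalty (hG.apply_nhds i) (hΛ.apply_nhds i)
      (hρtop.mono_left hl) (fun k => hU k i) (fun k => hΛeq k i)

theorem stmt16_general {N : ℕ} {n m p : Fin N → ℕ}
    (θ : Fin N → Strat n → ℝ)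
    (g : (ν : Fin N) → Fin (m ν) → Strat n → ℝ)
    (h : (ν : Fin N) → Fin (p ν) → Strat n → ℝ)
    (hθ : ∀ ν, ContDiff ℝ 1 (θ ν))
    (hg : ∀ ν i, ContDiff ℝ 1 (g ν i))
    (hh : ∀ ν j, ContDiff ℝ 1 (h ν j))
    (x : ℕ → Strat n)
    (lam : (k : ℕ) → (ν : Fin N) → Fin (m ν) → ℝ)
    (mu : (k : ℕ) → (ν : Fin N) → Fin (p ν) → ℝ)
    (u : (k : ℕ) → (ν : Fin N) → Fin (m ν) → ℝ)
    (rho : ℕ → Fin N → ℝ)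
    (umax : ℝ) (τ γ : Fin N → ℝ)
    (humax : 0 ≤ umax)
    (hτ : ∀ ν, τ ν ∈ Set.Ioo (0:ℝ) 1)
    (hγ : ∀ ν, 1 < γ ν)
    (hrho0 : ∀ ν, 0 < rho 0 ν)
    (hu0 : ∀ ν i, u 0 ν i ∈ Set.Icc 0 umax)
    (hlam : ∀ k ν i, lam (k+1) ν i = max (u k ν i + rho k ν * g ν i (x (k+1))) 0)
    (hu : ∀ k ν i, u (k+1) ν i = min (lam (k+1) ν i) umax)
    (hrho : ∀ k ν,
      (Real.sqrt (∑ i, (min (-(g ν i (x (k+1)))) (lam (k+1) ν i)) ^ 2) ≤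
          τ ν * Real.sqrt (∑ i, (min (-(g ν i (x k))) (lam k ν i)) ^ 2) →
        rho (k+1) ν = rho k ν) ∧
      (¬ (Real.sqrt (∑ i, (min (-(g ν i (x (k+1)))) (lam (k+1) ν i)) ^ 2) ≤
          τ ν * Real.sqrt (∑ i, (min (-(g ν i (x k))) (lam k ν i)) ^ 2)) →
        rho (k+1) ν = γ ν * rho k ν))
    (eps eps' : ℕ → ℝ)
    (heps' : Tendsto eps' atTop (𝓝 0))
    (hA1 : ∀ k ν, ‖pgrad ν (θ ν) (x (k+1))
        + ∑ i, max (u k ν i + rho k ν * g ν i (x (k+1))) 0 • pgrad ν (g ν i) (x (k+1))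
        + ∑ j, mu (k+1) ν j • pgrad ν (h ν j) (x (k+1))‖ ≤ eps k)
    (hA2 : ∀ k ν, Real.sqrt (∑ j, (min (-(h ν j (x (k+1)))) (mu (k+1) ν j)) ^ 2) ≤ eps' k)
    (heps : Tendsto eps atTop (𝓝 0))
    (xbar : Strat n)
    (lambar : (ν : Fin N) → Fin (m ν) → ℝ) (mubar : (ν : Fin N) → Fin (p ν) → ℝ)
    (hclus : MapClusterPt (xbar, lambar, mubar) atTop (fun k => (x k, lam k, mu k))) :
    ∀ ν, (pgrad ν (θ ν) xbar + ∑ i, lambar ν i • pgrad ν (g ν i) xbar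
        + ∑ j, mubar ν j • pgrad ν (h ν j) xbar = 0) ∧
      (∀ i, min (-(g ν i xbar)) (lambar ν i) = 0) ∧
      (∀ j, min (-(h ν j xbar)) (mubar ν j) = 0) := by
  obtain ⟨l, hl, hlim⟩ := mapClusterPt_iff_ultrafilter.1
    ((mapClusterPt_atTop_comp_add_nat_iff 1).2 hclus)
  have hx : Tendsto (fun k => x (k + 1)) l (𝓝 xbar) := hlim.fst_nhds
  have hlam' : Tendsto (fun k => lam (k + 1)) l (𝓝 lambar) := hlim.snd_nhds.fst_nhds
  have hmu' : Tendsto (fun k => mu (k + 1)) l (𝓝 mubar) := hlim.snd_nhds.snd_nhds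
  have hu_mem : ∀ k ν i, u k ν i ∈ Set.Icc 0 umax := by
    rintro (_ | k) ν i
    · exact hu0 ν i
    · rw [hu, hlam]
      exact ⟨le_min (le_max_right _ _) humax, min_le_right _ _⟩
  intro ν
  refine ⟨?_, fun i => ?_, fun j => ?_⟩
  · refine eq_zero_of_tendsto_of_norm_le
      (hx.pgrad_lagrangian ν (hθ ν) (hg ν) (hh ν) (hlam'.apply_nhds ν) (hmu'.apply_nhds ν))
      (heps.mono_left hl) fun k => ?_
    simpa only [hlam] using hA1 k ν
  · exact min_neg_eq_zero_of_penalty_update (G := fun k i => g ν i (x k))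
      (Λ := fun k => lam k ν) (U := fun k => u k ν) (ρ := fun k => rho k ν) hl
      (tendsto_pi_nhds.2 fun i => ((hg ν i).continuous.tendsto _).comp hx)
      (hlam'.apply_nhds ν) (fun k => hu_mem k ν) (fun k => hlam k ν) (hτ ν).2 (hγ ν) (hrho0 ν)
      (fun k => hrho k ν) i
  · exact eq_zero_of_tendsto_of_norm_le
      ((((hh ν j).continuous.tendsto _).comp hx).neg.min ((hmu'.apply_nhds ν).apply_nhds j))
      (heps'.mono_left hl) fun k => (abs_min_le_complementarityResidual _ _ j).trans (hA2 k ν)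

/-- **Theorem 4.8.** Every limit point of the sequence of triples
`(x^k, λ^k, μ^k)` generated by the augmented Lagrangian method is a KKT point of the GNEP;
no constraint qualification is needed. -/
theorem stmt16 {N : ℕ} {n m p : Fin N → ℕ}
    (θ : Fin N → Strat n → ℝ)
    (g : (ν : Fin N) → Fin (m ν) → Strat n → ℝ)
    (h : (ν : Fin N) → Fin (p ν) → Strat n → ℝ)
    (hθ : ∀ ν, ContDiff ℝ 1 (θ ν))
    (hg : ∀ ν i, ContDiff ℝ 1 (g ν i))
    (hh : ∀ ν j, ContDiff ℝ 1 (h ν j))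
    (x : ℕ → Strat n)
    (lam : (k : ℕ) → (ν : Fin N) → Fin (m ν) → ℝ)
    (mu : (k : ℕ) → (ν : Fin N) → Fin (p ν) → ℝ)
    (u : (k : ℕ) → (ν : Fin N) → Fin (m ν) → ℝ)
    (rho : ℕ → Fin N → ℝ)
    (umax : ℝ) (τ γ : Fin N → ℝ)
    (humax : 0 ≤ umax)
    (hτ : ∀ ν, τ ν ∈ Set.Ioo (0:ℝ) 1)
    (hγ : ∀ ν, 1 < γ ν)
    (hrho0 : ∀ ν, 0 < rho 0 ν)
    (hu0 : ∀ ν i, u 0 ν i ∈ Set.Icc 0 umax)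
    (hlam : ∀ k ν i, lam (k+1) ν i = max (u k ν i + rho k ν * g ν i (x (k+1))) 0)
    (hu : ∀ k ν i, u (k+1) ν i = min (lam (k+1) ν i) umax)
    (hrho : ∀ k ν,
      (Real.sqrt (∑ i, (min (-(g ν i (x (k+1)))) (lam (k+1) ν i)) ^ 2) ≤
          τ ν * Real.sqrt (∑ i, (min (-(g ν i (x k))) (lam k ν i)) ^ 2) →
        rho (k+1) ν = rho k ν) ∧
      (¬ (Real.sqrt (∑ i, (min (-(g ν i (x (k+1)))) (lam (k+1) ν i)) ^ 2) ≤
          τ ν * Real.sqrt (∑ i, (min (-(g ν i (x k))) (lam k ν i)) ^ 2)) →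
        rho (k+1) ν = γ ν * rho k ν))
    (eps eps' : ℕ → ℝ)
    (heps0 : ∀ k, 0 ≤ eps k)
    (heps'0 : ∀ k, 0 ≤ eps' k)
    (heps' : Tendsto eps' atTop (𝓝 0))
    (hA1 : ∀ k ν, ‖pgrad ν (θ ν) (x (k+1))
        + ∑ i, max (u k ν i + rho k ν * g ν i (x (k+1))) 0 • pgrad ν (g ν i) (x (k+1))
        + ∑ j, mu (k+1) ν j • pgrad ν (h ν j) (x (k+1))‖ ≤ eps k)
    (hA2 : ∀ k ν, Real.sqrt (∑ j, (min (-(h ν j (x (k+1)))) (mu (k+1) ν j)) ^ 2) ≤ eps' k)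
    (heps : Tendsto eps atTop (𝓝 0))
    (xbar : Strat n)
    (lambar : (ν : Fin N) → Fin (m ν) → ℝ) (mubar : (ν : Fin N) → Fin (p ν) → ℝ)
    (hclus : MapClusterPt (xbar, lambar, mubar) atTop (fun k => (x k, lam k, mu k))) :
    ∀ ν, (pgrad ν (θ ν) xbar + ∑ i, lambar ν i • pgrad ν (g ν i) xbar
        + ∑ j, mubar ν j • pgrad ν (h ν j) xbar = 0) ∧
      (∀ i, min (-(g ν i xbar)) (lambar ν i) = 0) ∧
      (∀ j, min (-(h ν j xbar)) (mubar ν j) = 0) :=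
  stmt16_general θ g h hθ hg hh x lam mu u rho umax τ γ humax hτ hγ hrho0 hu0 hlam hu hrho eps eps'
    heps' hA1 hA2 heps xbar lambar mubar hclus
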